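/- Let v ≥ 0 be a continuous subharmonic function on the closed upper half-plane H⁺ = {z ∈ ℂ : Im z ≥ 0} (subharmonic on the interior), vanishing on the real axis. Suppose there exists a real number d > 1 such that v(dz) = d·v(z) for all z ∈ H⁺. Then there is a constant c ≥ 0 such that v(z) = c·Im z for all z ∈ H⁺. -/

import Mathlib

set_option maxHeartbeats 4000000

open Real MeasureTheory intervalIntegral Metric Set Complex


lemma eqOn_of_integral (f : ℝ → ℝ) (m : ℝ) (hf : Continuous f) (hle : ∀ θ, f θ ≤ m)
    (hI : 2 * π * m ≤ ∫ θ in (0:ℝ)..(2*π), f θ) :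
    ∀ θ ∈ Set.Icc (0:ℝ) (2*π), f θ = m := by
  set g : ℝ → ℝ := fun θ => m - f θ with hgdef
  have hg : Continuous g := continuous_const.sub hf
  have hg0 : ∀ θ, 0 ≤ g θ := fun θ => sub_nonneg.2 (hle θ)
  have hint : ∀ a b : ℝ, IntervalIntegrable g volume a b := fun a b =>
    hg.intervalIntegrable a b
  have hgI : (∫ θ in (0:ℝ)..(2*π), g θ) = 0 := by
    have h1 : (∫ θ in (0:ℝ)..(2*π), g θ) = 2*π*m - ∫ θ in (0:ℝ)..(2*π), f θ := by
      rw [intervalIntegral.integral_sub intervalIntegrable_const (hf.intervalIntegrable _ _)]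
      rw [intervalIntegral.integral_const, smul_eq_mul]
      ring
    have h2 : 0 ≤ ∫ θ in (0:ℝ)..(2*π), g θ :=
      intervalIntegral.integral_nonneg (by positivity) (fun u _ => hg0 u)
    have h3 : (∫ θ in (0:ℝ)..(2*π), g θ) ≤ 0 := by rw [h1]; linarith
    linarith
  clear_value g
  have key : ∀ θ ∈ Set.Ioo (0:ℝ) (2*π), g θ = 0 := by
    intro θ hθ
    by_contra hne
    have hgpos : 0 < g θ := lt_of_le_of_ne (hg0 θ) (Ne.symm hne)
    obtain ⟨δ, hδpos, hδ⟩ : ∃ δ > 0, ∀ t, dist t θ < δ → g θ / 2 < g t := by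
      have hca : ContinuousAt g θ := hg.continuousAt
      rw [Metric.continuousAt_iff] at hca
      obtain ⟨δ, hδpos, h⟩ := hca (g θ / 2) (by linarith)
      refine ⟨δ, hδpos, fun t ht => ?_⟩
      have := h ht
      rw [Real.dist_eq, abs_lt] at this
      linarith [this.1]
    set δ₂ := min (δ/2) (min (θ/2) ((2*π - θ)/2)) with hδ₂def
    have hδ₂pos : 0 < δ₂ := by
      apply lt_min (by linarith)
      exact lt_min (by linarith [hθ.1]) (by linarith [hθ.2])
    set a := θ - δ₂
    set b := θ + δ₂
    have hab : a < b := by simp only [a, b]; linarith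
    have ha0 : 0 ≤ a := by
      have : δ₂ ≤ θ/2 := le_trans (min_le_right _ _) (min_le_left _ _)
      simp only [a]; linarith [hθ.1]
    have hb2π : b ≤ 2*π := by
      have : δ₂ ≤ (2*π - θ)/2 := le_trans (min_le_right _ _) (min_le_right _ _)
      simp only [b]; linarith
    have hsplit : (∫ t in (0:ℝ)..(2*π), g t) =
        (∫ t in (0:ℝ)..a, g t) + (∫ t in a..b, g t) + (∫ t in b..(2*π), g t) := by
      rw [intervalIntegral.integral_add_adjacent_intervals (hint 0 a) (hint a b),
        intervalIntegral.integral_add_adjacent_intervals (hint 0 b) (hint b (2*π))]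
    have h1 : 0 ≤ ∫ t in (0:ℝ)..a, g t :=
      intervalIntegral.integral_nonneg ha0 (fun u _ => hg0 u)
    have h2 : 0 ≤ ∫ t in b..(2*π), g t :=
      intervalIntegral.integral_nonneg hb2π (fun u _ => hg0 u)
    have h3 : (b - a) * g θ / 2 ≤ ∫ t in a..b, g t := by
      have := intervalIntegral.integral_mono_on (f := fun _ => g θ / 2) (g := g) hab.le
        intervalIntegrable_const (hint a b) (fun x hx => by
          apply (hδ x _).le
          have hδ₂δ : δ₂ ≤ δ/2 := min_le_left _ _
          rw [Real.dist_eq, abs_lt]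
          constructor <;> [skip; skip] <;>
            · simp only [a, b] at hx; cases' hx with h1 h2; linarith)
      simpa [smul_eq_mul] using this
    have hpos : 0 < (b - a) * (g θ / 2) := by
      apply mul_pos (by linarith) (by linarith)
    linarith [hgI, hsplit, h1, h2, h3]
  intro θ hθ
  have hclos : Set.EqOn g 0 (Set.Icc (0:ℝ) (2*π)) := by
    have : Set.EqOn g 0 (Set.Ioo (0:ℝ) (2*π)) := fun t ht => key t ht
    have h := this.closure hg continuous_const
    rwa [closure_Ioo (by positivity : (0:ℝ) ≠ 2*π)] at h
  have h := hclos hθ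
  rw [hgdef] at h
  simp only [Pi.zero_apply] at h
  linarith

lemma meanValue {g : ℂ → ℂ} {c : ℂ} {r : ℝ} (hr : 0 < r)
    (hg : ∀ w ∈ Metric.closedBall c r, DifferentiableAt ℂ g w) :
    (∫ θ in (0:ℝ)..(2*π), g (c + r * Complex.exp (θ * Complex.I))) = (2*π) • g c := by
  have hcauchy := Complex.circleIntegral_sub_center_inv_smul_of_differentiable_on_off_countable
    (f := g) (c := c) (s := ∅) hr Set.countable_empty
    (fun w hw => (hg w hw).continuousAt.continuousWithinAt)
    (fun z hz => hg z (Metric.ball_subset_closedBall hz.1))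
  rw [circleIntegral] at hcauchy
  have heq : ∀ θ : ℝ, deriv (circleMap c r) θ • (circleMap c r θ - c)⁻¹ • g (circleMap c r θ)
      = Complex.I * g (circleMap c r θ) := by
    intro θ
    rw [deriv_circleMap, circleMap_sub_center, smul_eq_mul, smul_eq_mul]
    have hne : circleMap 0 r θ ≠ 0 := by
      have := circleMap_ne_center (c := (0:ℂ)) hr.ne' (θ := θ)
      simpa using this
    field_simp
  simp only [heq] at hcauchy
  rw [intervalIntegral.integral_const_mul] at hcauchy
  have hI : (Complex.I : ℂ) ≠ 0 := Complex.I_ne_zero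
  have h2 : (∫ θ in (0:ℝ)..(2*π), g (circleMap c r θ)) = (2*π) • g c := by
    rw [real_smul]
    push_cast
    rw [smul_eq_mul] at hcauchy
    apply mul_left_cancel₀ hI
    rw [hcauchy]; ring
  convert h2 using 2 with θ
  funext θ; simp [circleMap]

lemma exists_theta (z w : ℂ) (h : w ≠ z) :
    ∃ θ ∈ Set.Icc (0:ℝ) (2*π),
      w = z + ((‖w - z‖ : ℝ) : ℂ) * Complex.exp (θ * Complex.I) := by
  set v : ℂ := w - z with hvdef
  have hvne : v ≠ 0 := sub_ne_zero.2 h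
  set θh := if 0 ≤ Complex.arg v then Complex.arg v else Complex.arg v + 2 * π with hθhdef
  have h1 := Complex.arg_le_pi v
  have h2 := Complex.neg_pi_lt_arg v
  have hπ : 0 < π := Real.pi_pos
  refine ⟨θh, ?_, ?_⟩
  · rw [hθhdef]
    split_ifs with hh
    · exact ⟨hh, by linarith⟩
    · push_neg at hh
      exact ⟨by linarith, by linarith⟩
  · have hexp : Complex.exp (θh * Complex.I) = Complex.exp (Complex.arg v * Complex.I) := by
      rw [hθhdef]
      split_ifs with hh
      · rfl
      · push_cast
        rw [add_mul, Complex.exp_add]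
        rw [show ((2:ℂ) * π * Complex.I) = 2 * π * Complex.I by push_cast; ring]
        rw [Complex.exp_two_pi_mul_I, mul_one]
    rw [hexp]
    have habs := Complex.norm_mul_exp_arg_mul_I v
    rw [habs]
    rw [hvdef]; ring

lemma strongMax (u : ℂ → ℝ) (hc : ContinuousOn u {z : ℂ | 0 < z.im})
    (hsm : ∀ z ∈ {z : ℂ | 0 < z.im}, ∀ r : ℝ, 0 < r →
      Metric.closedBall z r ⊆ {z : ℂ | 0 < z.im} →
      u z ≤ (2 * π)⁻¹ * ∫ θ in (0:ℝ)..(2*π), u (z + r * Complex.exp (θ * Complex.I)))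
    (hle : ∀ z : ℂ, 0 < z.im → u z ≤ 0)
    (z₀ : ℂ) (hz₀ : 0 < z₀.im) (h0 : u z₀ = 0) :
    ∀ z : ℂ, 0 < z.im → u z = 0 := by
  set Ω : Set ℂ := {z | 0 < z.im} with hΩdef
  have hΩo : IsOpen Ω := by
    have : Ω = Complex.im ⁻¹' (Set.Ioi 0) := rfl
    rw [this]
    exact isOpen_Ioi.preimage Complex.continuous_im
  set S : Set ℂ := {z | 0 < z.im ∧ u z = 0} with hSdef
  set T : Set ℂ := {z | 0 < z.im ∧ u z < 0} with hTdef
  have h2π : (0:ℝ) < 2 * π := by positivity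
  have hSopen : IsOpen S := by
    rw [Metric.isOpen_iff]
    rintro z ⟨hzim, hzu⟩
    refine ⟨z.im / 2, by linarith, ?_⟩
    have hcirc : ∀ r : ℝ, 0 < r → r < z.im → ∀ θ ∈ Set.Icc (0:ℝ) (2*π),
        u (z + r * Complex.exp (θ * Complex.I)) = 0 := by
      intro r hr hrim
      have hball : Metric.closedBall z r ⊆ Ω := by
        intro w hw
        rw [Metric.mem_closedBall, Complex.dist_eq] at hw
        have him : |(w - z).im| ≤ ‖w - z‖ := Complex.abs_im_le_norm _
        have : z.im - r ≤ w.im := by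
          rw [Complex.sub_im] at him
          have := abs_le.1 him
          linarith [this.1]
        show 0 < w.im
        linarith
      have hsub := hsm z hzim r hr hball
      set φ : ℝ → ℝ := fun θ => u (z + r * Complex.exp (θ * Complex.I)) with hφdef
      have hmem : ∀ θ : ℝ, z + ↑r * Complex.exp (↑θ * Complex.I) ∈ Metric.closedBall z r := by
        intro θ
        rw [Metric.mem_closedBall, Complex.dist_eq]
        have : z + ↑r * Complex.exp (↑θ * Complex.I) - z = ↑r * Complex.exp (↑θ * Complex.I) := by
          ring
        rw [this, norm_mul, Complex.norm_real, Real.norm_eq_abs, Complex.norm_exp_ofReal_mul_I, mul_one,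
          abs_of_pos hr]
      have hφcont : Continuous φ := by
        apply hc.comp_continuous
        · continuity
        · exact fun θ => hball (hmem θ)
      have hφle : ∀ θ, φ θ ≤ 0 := fun θ => hle _ (hball (hmem θ))
      have hIle : 2 * π * 0 ≤ ∫ θ in (0:ℝ)..(2*π), φ θ := by
        rw [hzu, le_inv_mul_iff₀ h2π] at hsub
        simpa using hsub
      exact eqOn_of_integral φ 0 hφcont hφle hIle
    intro w hw
    rw [Metric.mem_ball, Complex.dist_eq] at hw
    by_cases hwz : w = z
    · rw [hwz]; exact ⟨hzim, hzu⟩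
    · have hr : 0 < ‖w - z‖ := by
        rw [norm_pos_iff]
        exact sub_ne_zero.2 hwz
      obtain ⟨θ, hθmem, hθeq⟩ := exists_theta z w hwz
      have him : 0 < w.im := by
        have := hw
        have him2 : |(w - z).im| ≤ ‖w - z‖ := Complex.abs_im_le_norm _
        rw [Complex.sub_im] at him2
        have := abs_le.1 him2
        linarith [this.1]
      refine ⟨him, ?_⟩
      have := hcirc (‖w - z‖) hr (by linarith) θ hθmem
      rw [← hθeq] at this
      exact this
  have hTopen : IsOpen T := by
    have : T = Ω ∩ u ⁻¹' (Set.Iio 0) := by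
      ext z; simp [hTdef, hΩdef, Set.mem_setOf_eq]
    rw [this]
    exact hc.isOpen_inter_preimage hΩo isOpen_Iio
  have hconv : Convex ℝ Ω := convex_halfSpace_im_gt 0
  have hpc : IsPreconnected Ω := hconv.isPreconnected
  intro z hz
  by_contra hne
  have hzT : z ∈ T := ⟨hz, lt_of_le_of_ne (hle z hz) hne⟩
  have hcover : Ω ⊆ S ∪ T := by
    intro x hx
    rcases lt_or_eq_of_le (hle x hx) with h | h
    · exact Or.inr ⟨hx, h⟩
    · exact Or.inl ⟨hx, h⟩
  have hint := hpc S T hSopen hTopen hcover ⟨z₀, hz₀, hz₀, h0⟩ ⟨z, hz, hzT⟩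
  obtain ⟨x, _, hxS, hxT⟩ := hint
  exact absurd hxT.2 (not_lt.2 (le_of_eq hxS.2.symm))

lemma maxPrinciple (U : Set ℂ) (hUo : IsOpen U) (hUb : Bornology.IsBounded U)
    (u : ℂ → ℝ) (hc : ContinuousOn u U)
    (hsm : ∀ z ∈ U, ∀ r : ℝ, 0 < r → Metric.closedBall z r ⊆ U →
      u z ≤ (2 * π)⁻¹ * ∫ θ in (0:ℝ)..(2*π), u (z + r * Complex.exp (θ * Complex.I)))
    (hbd : ∀ ε : ℝ, 0 < ε → ∀ w ∈ frontier U, ∀ᶠ z in nhdsWithin w U, u z ≤ ε) :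
    ∀ z ∈ U, u z ≤ 0 := by
  have main : ∀ ε : ℝ, 0 < ε → ∀ z ∈ U, u z ≤ ε := by
    intro ε hε
    by_contra hcon
    push_neg at hcon
    obtain ⟨zs, hzsU, hzs⟩ := hcon
    -- compactness
    have hUcc : IsCompact (closure U) :=
      Metric.isCompact_of_isClosed_isBounded isClosed_closure hUb.closure
    have hfr : IsCompact (frontier U) :=
      hUcc.of_isClosed_subset isClosed_frontier frontier_subset_closure
    -- boundary neighborhoods
    have hsel : ∀ w, w ∈ frontier U → ∃ s : Set ℂ, IsOpen s ∧ w ∈ s ∧ ∀ z ∈ s ∩ U, u z ≤ ε := by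
      intro w hw
      have h := hbd ε hε w hw
      rw [eventually_nhdsWithin_iff, _root_.eventually_nhds_iff] at h
      obtain ⟨t, ht1, ht2, ht3⟩ := h
      exact ⟨t, ht2, ht3, fun z hz => ht1 z hz.1 hz.2⟩
    choose s hso hsw hsb using hsel
    set V : Set ℂ := ⋃ (w : ℂ) (hw : w ∈ frontier U), s w hw with hVdef
    have hVo : IsOpen V := isOpen_iUnion fun w => isOpen_iUnion fun hw => hso w hw
    have hVfr : frontier U ⊆ V := fun w hw => Set.mem_iUnion₂.2 ⟨w, hw, hsw w hw⟩
    have hVb : ∀ z, z ∈ V → z ∈ U → u z ≤ ε := by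
      intro z hzV hzU
      obtain ⟨w, hw, hz⟩ := Set.mem_iUnion₂.1 hzV
      exact hsb w hw z ⟨hz, hzU⟩
    -- the compact core
    set K : Set ℂ := closure U \ V with hKdef
    have hK : IsCompact K := hUcc.diff hVo
    have hKU : K ⊆ U := by
      intro z hz
      have h1 : z ∈ closure U := hz.1
      have h2 : z ∉ frontier U := fun h => hz.2 (hVfr h)
      have : z ∈ interior U := by
        by_contra h3
        exact h2 ⟨h1, h3⟩
      rwa [hUo.interior_eq] at this
    have hzsK : zs ∈ K := ⟨subset_closure hzsU, fun hV => absurd (hVb zs hV hzsU) (not_le.2 hzs)⟩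
    obtain ⟨z₀, hz₀K, hz₀max⟩ := hK.exists_isMaxOn ⟨zs, hzsK⟩ (hc.mono hKU)
    set m := u z₀ with hmdef
    have hm : ε < m := lt_of_lt_of_le hzs (hz₀max hzsK)
    have hglob : ∀ z ∈ U, u z ≤ m := by
      intro z hz
      by_cases hzV : z ∈ V
      · exact (hVb z hzV hz).trans hm.le
      · exact hz₀max ⟨subset_closure hz, hzV⟩
    -- set of maximizers
    set S : Set ℂ := K ∩ u ⁻¹' {m} with hSdef
    have hScl : IsClosed S :=
      (hc.mono hKU).preimage_isClosed_of_isClosed hK.isClosed isClosed_singleton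
    have hScomp : IsCompact S := hK.of_isClosed_subset hScl inter_subset_left
    have hSne : S.Nonempty := ⟨z₀, hz₀K, rfl⟩
    obtain ⟨z₁, hz₁S, hz₁min⟩ := hScomp.exists_isMinOn hSne
      ((Metric.continuous_infDist_pt Uᶜ).continuousOn)
    have hz₁U : z₁ ∈ U := hKU hz₁S.1
    -- U ≠ univ
    obtain ⟨R, hR⟩ := hUb.subset_closedBall 0
    have hUcne : Uᶜ.Nonempty := by
      refine ⟨((|R| + 1 : ℝ) : ℂ), fun h => ?_⟩
      have := hR h
      rw [Metric.mem_closedBall, Complex.dist_eq] at this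
      simp only [sub_zero] at this
      rw [Complex.norm_real, Real.norm_eq_abs] at this
      have : |R| + 1 ≤ R := le_trans (le_abs_self _) this
      have : R ≤ |R| := le_abs_self R
      linarith
    have hgpos : 0 < Metric.infDist z₁ Uᶜ := by
      rw [← (hUo.isClosed_compl.notMem_iff_infDist_pos hUcne)]
      simp [hz₁U]
    set r := Metric.infDist z₁ Uᶜ / 2 with hrdef
    have hr : 0 < r := by positivity
    have hball : Metric.closedBall z₁ r ⊆ U := by
      intro w hw
      by_contra hwU
      have h1 := Metric.infDist_le_dist_of_mem (x := z₁) (show w ∈ Uᶜ from hwU)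
      rw [Metric.mem_closedBall, dist_comm] at hw
      linarith
    have hsub1 := hsm z₁ hz₁U r hr hball
    set φ : ℝ → ℝ := fun θ => u (z₁ + r * Complex.exp (θ * Complex.I)) with hφdef
    have hmem : ∀ θ : ℝ, z₁ + r * Complex.exp (θ * Complex.I) ∈ Metric.closedBall z₁ r := by
      intro θ
      rw [Metric.mem_closedBall, Complex.dist_eq]
      have : z₁ + ↑r * Complex.exp (↑θ * Complex.I) - z₁ = r * Complex.exp (θ * Complex.I) := by
        ring
      rw [this, norm_mul, Complex.norm_real, Real.norm_eq_abs, Complex.norm_exp_ofReal_mul_I, mul_one,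
        abs_of_pos hr]
    have hφcont : Continuous φ := by
      apply hc.comp_continuous
      · continuity
      · exact fun θ => hball (hmem θ)
    have hφle : ∀ θ, φ θ ≤ m := fun θ => hglob _ (hball (hmem θ))
    have h2π : (0:ℝ) < 2 * π := by positivity
    have hIle : 2 * π * m ≤ ∫ θ in (0:ℝ)..(2*π), φ θ := by
      have hz₁m : u z₁ = m := hz₁S.2
      rw [hz₁m, le_inv_mul_iff₀ h2π] at hsub1
      exact hsub1
    have hall := eqOn_of_integral φ m hφcont hφle hIle
    -- pick the direction towards the nearest boundary point
    obtain ⟨y, hyUc, hy⟩ := (Metric.infDist_lt_iff hUcne).1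
      (show Metric.infDist z₁ Uᶜ < Metric.infDist z₁ Uᶜ + r / 2 by linarith)
    have hDinf : Metric.infDist z₁ Uᶜ ≤ dist z₁ y := Metric.infDist_le_dist_of_mem hyUc
    set w : ℂ := y - z₁ with hwdef
    set D : ℝ := ‖w‖ with hDdef
    have hDdist : D = dist z₁ y := by
      rw [Complex.dist_eq, hDdef, hwdef, show y - z₁ = -(z₁ - y) by ring, norm_neg]
    have hD2r : 2 * r ≤ D := by rw [hDdist, hrdef] at *; linarith
    have hDpos : 0 < D := by linarith
    have hwne : w ≠ 0 := by
      have hD : ‖w‖ ≠ 0 := by rw [← hDdef]; exact hDpos.ne'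
      exact fun h => hD (by rw [h, norm_zero])
    set θh := if 0 ≤ Complex.arg w then Complex.arg w else Complex.arg w + 2 * π with hθhdef
    have hθhmem : θh ∈ Set.Icc (0:ℝ) (2*π) := by
      have h1 := Complex.arg_le_pi w
      have h2 := Complex.neg_pi_lt_arg w
      have hπ : 0 < π := Real.pi_pos
      rw [hθhdef]
      split_ifs with h
      · exact ⟨h, by linarith⟩
      · push_neg at h
        exact ⟨by linarith, by linarith⟩
    have hDC : (D:ℂ) ≠ 0 := by
      simpa using hDpos.ne'
    have hexpθh : Complex.exp (θh * Complex.I) = w / (D:ℂ) := by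
      have habs := Complex.norm_mul_exp_arg_mul_I w
      have hexp : Complex.exp (θh * Complex.I) = Complex.exp (Complex.arg w * Complex.I) := by
        rw [hθhdef]
        split_ifs with h
        · rfl
        · push_cast
          rw [add_mul, Complex.exp_add]
          rw [show ((2:ℂ) * π * Complex.I) = 2 * π * Complex.I by push_cast; ring]
          rw [Complex.exp_two_pi_mul_I, mul_one]
      rw [hexp, eq_div_iff hDC, hDdef]
      linear_combination habs
    set z₂ := z₁ + (r : ℂ) * Complex.exp (θh * Complex.I) with hz₂def
    have hz₂ball : z₂ ∈ Metric.closedBall z₁ r := hmem θh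
    have hz₂U : z₂ ∈ U := hball hz₂ball
    have hz₂m : u z₂ = m := hall θh hθhmem
    have hz₂S : z₂ ∈ S := by
      refine ⟨⟨subset_closure hz₂U, fun hV => ?_⟩, hz₂m⟩
      exact absurd (hVb z₂ hV hz₂U) (not_le.2 (hz₂m ▸ hm))
    -- distance decreases: contradiction
    have hdist2 : dist z₂ y = D - r := by
      rw [Complex.dist_eq]
      have hz₂y : z₂ - y = ((r / D - 1 : ℝ) : ℂ) * w := by
        rw [hz₂def, hexpθh]
        push_cast
        rw [hwdef]
        field_simp
        ring
      rw [hz₂y, norm_mul, Complex.norm_real, Real.norm_eq_abs, ← hDdef]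
      have : |r / D - 1| = 1 - r / D := by
        rw [abs_of_nonpos]
        · ring
        · have : r / D ≤ 1 / 2 := by
            rw [div_le_div_iff₀ hDpos (by norm_num)]
            linarith
          linarith
      rw [this]
      field_simp
    have hinf2 : Metric.infDist z₂ Uᶜ < Metric.infDist z₁ Uᶜ := by
      have h1 : Metric.infDist z₂ Uᶜ ≤ dist z₂ y := Metric.infDist_le_dist_of_mem hyUc
      rw [hdist2] at h1
      rw [hDdist] at *
      linarith
    have := hz₁min hz₂S
    simp only [Set.mem_setOf_eq] at this
    exact absurd this (not_le.2 hinf2)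
  intro z hz
  by_contra hcon
  push_neg at hcon
  exact absurd (main (u z / 2) (by linarith) z hz) (by push_neg; linarith)

noncomputable def psi (q : ℝ) (z : ℂ) : ℝ := z.im / Complex.normSq (z - (q:ℂ))

lemma psi_nonneg (q : ℝ) (z : ℂ) (hz : 0 ≤ z.im) : 0 ≤ psi q z :=
  div_nonneg hz (Complex.normSq_nonneg _)

lemma psi_contAt (q : ℝ) (z : ℂ) (hz : z ≠ (q:ℂ)) : ContinuousAt (psi q) z := by
  apply ContinuousAt.div
  · exact Complex.continuous_im.continuousAt
  · exact (Complex.continuous_normSq.comp (continuous_id.sub continuous_const)).continuousAt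
  · exact (Complex.normSq_pos.2 (sub_ne_zero.2 hz)).ne'

lemma mem_circle_closedBall (z : ℂ) {r : ℝ} (hr : 0 < r) (θ : ℝ) :
    z + (r:ℂ) * Complex.exp ((θ:ℂ) * Complex.I) ∈ Metric.closedBall z r := by
  rw [Metric.mem_closedBall, Complex.dist_eq]
  have : z + ↑r * Complex.exp (↑θ * Complex.I) - z = ↑r * Complex.exp (↑θ * Complex.I) := by ring
  rw [this, norm_mul, Complex.norm_real, Real.norm_eq_abs, Complex.norm_exp_ofReal_mul_I, mul_one, abs_of_pos hr]

lemma PL (v : ℂ → ℝ) (hcont : ContinuousOn v {z : ℂ | 0 ≤ z.im})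
    (hreal : ∀ x : ℝ, v (x:ℂ) = 0)
    (hsub : ∀ z ∈ {z : ℂ | 0 < z.im}, ∀ r : ℝ, 0 < r →
      Metric.closedBall z r ⊆ {z : ℂ | 0 < z.im} →
      v z ≤ (2 * π)⁻¹ * ∫ θ in (0:ℝ)..(2*π), v (z + r * Complex.exp (θ * Complex.I)))
    (x ρ α κ : ℝ) (hρ : 0 < ρ) (hα : 0 ≤ α) (hκ : 0 ≤ κ)
    (harc : ∀ w : ℂ, 0 < w.im → ‖w - (x:ℂ)‖ = ρ →
      v w ≤ α * w.im + κ * (psi (x+ρ) w + psi (x-ρ) w)) :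
    ∀ z : ℂ, 0 < z.im → ‖z - (x:ℂ)‖ < ρ →
      v z ≤ α * z.im + κ * (psi (x+ρ) z + psi (x-ρ) z) := by
  have h2π : (0:ℝ) < 2 * π := by positivity
  set p : ℂ := ((x+ρ : ℝ) : ℂ) with hpdef
  set p' : ℂ := ((x-ρ : ℝ) : ℂ) with hp'def
  set h : ℂ → ℝ := fun z => α * z.im + κ * (psi (x+ρ) z + psi (x-ρ) z) with hhdef
  set u : ℂ → ℝ := fun z => v z - h z with hudef
  set U : Set ℂ := {z : ℂ | 0 < z.im} ∩ Metric.ball (x:ℂ) ρ with hUdef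
  have hUo : IsOpen U := (isOpen_lt continuous_const Complex.continuous_im).inter
    Metric.isOpen_ball
  have hUb : Bornology.IsBounded U := Metric.isBounded_ball.subset Set.inter_subset_right
  have hUsub : U ⊆ {z : ℂ | 0 < z.im} := Set.inter_subset_left
  have hUsub' : U ⊆ {z : ℂ | 0 ≤ z.im} := by
    intro z hz
    show (0:ℝ) ≤ z.im
    exact le_of_lt (hUsub hz)
  have hnep : ∀ z : ℂ, 0 < z.im → z ≠ p := by
    intro z hz he
    rw [he] at hz
    simp [hpdef, Complex.ofReal_im] at hz
  have hnep' : ∀ z : ℂ, 0 < z.im → z ≠ p' := by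
    intro z hz he
    rw [he] at hz
    simp [hp'def, Complex.ofReal_im] at hz
  have hhcontAt : ∀ z : ℂ, z ≠ p → z ≠ p' → ContinuousAt h z := by
    intro z h1 h2
    apply ContinuousAt.add
    · exact continuousAt_const.mul Complex.continuous_im.continuousAt
    · exact continuousAt_const.mul ((psi_contAt _ _ h1).add (psi_contAt _ _ h2))
  have hh0 : ∀ z : ℂ, 0 ≤ z.im → 0 ≤ h z := by
    intro z hz
    apply add_nonneg (mul_nonneg hα hz)
    exact mul_nonneg hκ (add_nonneg (psi_nonneg _ _ hz) (psi_nonneg _ _ hz))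
  have hucont : ContinuousOn u U := by
    apply ContinuousOn.sub (hcont.mono hUsub')
    intro z hz
    exact (hhcontAt z (hnep z hz.1) (hnep' z hz.1)).continuousWithinAt
  -- the holomorphic companion
  set g : ℂ → ℂ := fun w => (α:ℂ) * w - (κ:ℂ) * ((w - p)⁻¹ + (w - p')⁻¹) with hgdef
  have hgim : ∀ w : ℂ, h w = (g w).im := by
    intro w
    simp only [hgdef, hhdef, psi, Complex.sub_im, Complex.add_im, Complex.mul_im,
      Complex.ofReal_re, Complex.ofReal_im, Complex.inv_im, hpdef, hp'def]
    ring
  -- submean property of u on U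
  have hsm : ∀ z ∈ U, ∀ r : ℝ, 0 < r → Metric.closedBall z r ⊆ U →
      u z ≤ (2 * π)⁻¹ * ∫ θ in (0:ℝ)..(2*π), u (z + r * Complex.exp (θ * Complex.I)) := by
    intro z hz r hr hball
    have h1 := hsub z (hUsub hz) r hr (fun w hw => hUsub (hball hw))
    have hgd : ∀ w ∈ Metric.closedBall z r, DifferentiableAt ℂ g w := by
      intro w hw
      have hwU := hball hw
      have hw1 : w - p ≠ 0 := sub_ne_zero.2 (hnep w hwU.1)
      have hw2 : w - p' ≠ 0 := sub_ne_zero.2 (hnep' w hwU.1)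
      apply DifferentiableAt.sub
      · exact (differentiableAt_const _).mul differentiableAt_id
      · exact (differentiableAt_const _).mul
          (((differentiableAt_id.sub_const p).inv hw1).add
            ((differentiableAt_id.sub_const p').inv hw2))
    have hmv := meanValue hr hgd
    have hcircle : Continuous (fun θ : ℝ => z + (r:ℂ) * Complex.exp ((θ:ℂ) * Complex.I)) := by
      continuity
    have hgcont : Continuous (fun θ : ℝ => g (z + (r:ℂ) * Complex.exp ((θ:ℂ) * Complex.I))) := by
      apply ContinuousOn.comp_continuous
        (s := Metric.closedBall z r) (fun w hw => (hgd w hw).continuousAt.continuousWithinAt)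
        hcircle
      exact fun θ => mem_circle_closedBall z hr θ
    have hIg : IntervalIntegrable (fun θ : ℝ => g (z + (r:ℂ) * Complex.exp ((θ:ℂ) * Complex.I)))
        volume 0 (2*π) := hgcont.intervalIntegrable _ _
    have him_int := Complex.imCLM.intervalIntegral_comp_comm hIg
    have hH : (∫ θ in (0:ℝ)..(2*π), h (z + (r:ℂ) * Complex.exp ((θ:ℂ) * Complex.I)))
        = 2 * π * h z := by
      have he : (fun θ : ℝ => h (z + (r:ℂ) * Complex.exp ((θ:ℂ) * Complex.I)))
          = fun θ : ℝ => Complex.imCLM (g (z + (r:ℂ) * Complex.exp ((θ:ℂ) * Complex.I))) := by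
        funext θ
        rw [hgim]
        simp [Complex.imCLM_apply]
      rw [he, him_int, hmv]
      simp only [Complex.imCLM_apply, Complex.smul_im]
      rw [← hgim, smul_eq_mul]
    have hhcont2 : Continuous (fun θ : ℝ => h (z + (r:ℂ) * Complex.exp ((θ:ℂ) * Complex.I))) := by
      apply ContinuousOn.comp_continuous (s := Metric.closedBall z r)
        (fun w hw => (hhcontAt w (hnep w (hball hw).1) (hnep' w (hball hw).1)).continuousWithinAt)
        hcircle
      exact fun θ => mem_circle_closedBall z hr θ
    have hvcont2 : Continuous (fun θ : ℝ => v (z + (r:ℂ) * Complex.exp ((θ:ℂ) * Complex.I))) := by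
      apply ContinuousOn.comp_continuous (s := {z : ℂ | 0 ≤ z.im}) hcont hcircle
      exact fun θ => hUsub' (hball (mem_circle_closedBall z hr θ))
    have hIeq : (∫ θ in (0:ℝ)..(2*π), u (z + (r:ℂ) * Complex.exp ((θ:ℂ) * Complex.I)))
        = (∫ θ in (0:ℝ)..(2*π), v (z + (r:ℂ) * Complex.exp ((θ:ℂ) * Complex.I))) - 2 * π * h z := by
      rw [show (fun θ : ℝ => u (z + (r:ℂ) * Complex.exp ((θ:ℂ) * Complex.I)))
          = (fun θ : ℝ => v (z + (r:ℂ) * Complex.exp ((θ:ℂ) * Complex.I))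
            - h (z + (r:ℂ) * Complex.exp ((θ:ℂ) * Complex.I))) from rfl]
      rw [intervalIntegral.integral_sub (hvcont2.intervalIntegrable _ _)
        (hhcont2.intervalIntegrable _ _), hH]
    show v z - h z ≤ (2 * π)⁻¹ * ∫ θ in (0:ℝ)..(2*π), u (z + (r:ℂ) * Complex.exp ((θ:ℂ) * Complex.I))
    rw [hIeq, mul_sub, ← mul_assoc, inv_mul_cancel₀ h2π.ne', one_mul]
    linarith
  -- boundary behaviour
  have hbd : ∀ ε : ℝ, 0 < ε → ∀ w ∈ frontier U, ∀ᶠ z in nhdsWithin w U, u z ≤ ε := by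
    intro ε hε w hw
    have hwcl : w ∈ closure U := frontier_subset_closure hw
    have hwim : 0 ≤ w.im := by
      have h1 : closure U ⊆ {z : ℂ | 0 ≤ z.im} :=
        closure_minimal (hUsub'.trans (le_refl _)) (by
          have : {z : ℂ | 0 ≤ z.im} = Complex.im ⁻¹' (Set.Ici 0) := rfl
          rw [this]
          exact isClosed_Ici.preimage Complex.continuous_im)
      exact h1 hwcl
    have hwball : ‖w - (x:ℂ)‖ ≤ ρ := by
      have h1 : closure U ⊆ Metric.closedBall (x:ℂ) ρ := by
        apply closure_minimal (Set.inter_subset_right.trans Metric.ball_subset_closedBall)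
        exact Metric.isClosed_closedBall
      have := h1 hwcl
      rwa [Metric.mem_closedBall, Complex.dist_eq] at this
    have hwnU : w ∉ U := by
      rw [hUo.frontier_eq] at hw
      exact hw.2
    have hvw : ContinuousWithinAt v U w := (hcont w hwim).mono hUsub'
    by_cases hcorner : w = p ∨ w = p'
    · -- corner case: u ≤ v near w and v → 0
      have hvw0 : v w = 0 := by
        rcases hcorner with h | h
        · rw [h, hpdef]; exact hreal _
        · rw [h, hp'def]; exact hreal _
      have htend : Filter.Tendsto v (nhdsWithin w U) (nhds 0) := by
        rw [← hvw0]
        exact hvw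
      have hev : ∀ᶠ z in nhdsWithin w U, v z < ε :=
        htend.eventually (eventually_lt_nhds hε)
      filter_upwards [hev, self_mem_nhdsWithin] with z hz1 hz2
      have : u z ≤ v z := by
        simp only [hudef]
        have := hh0 z (le_of_lt hz2.1)
        linarith
      linarith
    · push_neg at hcorner
      have hucw : ContinuousWithinAt u U w := by
        apply ContinuousWithinAt.sub hvw
        exact (hhcontAt w hcorner.1 hcorner.2).continuousWithinAt
      have huw : u w ≤ 0 := by
        rcases eq_or_lt_of_le hwim with heq | hlt
        · -- on the real axis
          have hwre : w = ((w.re : ℝ) : ℂ) := by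
            apply Complex.ext
            · simp
            · simp [← heq]
          have hv0 : v w = 0 := by rw [hwre]; exact hreal _
          have hh0' : h w = 0 := by
            simp only [hhdef, psi]
            rw [← heq]
            simp
          simp only [hudef]
          rw [hv0, hh0']
          norm_num
        · -- on the arc
          have harcw : ‖w - (x:ℂ)‖ = ρ := by
            rcases lt_or_eq_of_le hwball with h | h
            · exfalso
              apply hwnU
              exact ⟨hlt, by rwa [Metric.mem_ball, Complex.dist_eq]⟩
            · exact h
          have := harc w hlt harcw
          simp only [hudef, hhdef]
          linarith
      have htend : Filter.Tendsto u (nhdsWithin w U) (nhds (u w)) := hucw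
      have hev : ∀ᶠ z in nhdsWithin w U, u z < ε :=
        htend.eventually (eventually_lt_nhds (lt_of_le_of_lt huw hε))
      filter_upwards [hev] with z hz
      linarith
  have hfinal := maxPrinciple U hUo hUb u hucont hsm hbd
  intro z hzim hzball
  have hzU : z ∈ U := ⟨hzim, by rwa [Metric.mem_ball, Complex.dist_eq]⟩
  have := hfinal z hzU
  simp only [hudef, hhdef] at this
  linarith

/-- `v` satisfies the sub-mean value inequality on `s` (a standard
characterization of subharmonicity for continuous functions). -/
def SubmeanOn (v : ℂ → ℝ) (s : Set ℂ) : Prop :=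
  ∀ z ∈ s, ∀ r : ℝ, 0 < r → Metric.closedBall z r ⊆ s →
    v z ≤ (2 * Real.pi)⁻¹ *
      ∫ θ in (0 : ℝ)..(2 * Real.pi), v (z + r * Complex.exp (θ * Complex.I))

theorem stmt_6 (v : ℂ → ℝ)
    (hcont : ContinuousOn v {z : ℂ | 0 ≤ z.im})
    (hpos : ∀ z : ℂ, 0 ≤ z.im → 0 ≤ v z)
    (hreal : ∀ x : ℝ, v x = 0)
    (hsub : SubmeanOn v {z : ℂ | 0 < z.im})
    (d : ℝ) (hd : 1 < d)
    (hhom : ∀ z : ℂ, 0 ≤ z.im → v ((d : ℂ) * z) = d * v z) :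
    ∃ c : ℝ, 0 ≤ c ∧ ∀ z : ℂ, 0 ≤ z.im → v z = c * z.im := by
  have hd0 : (0:ℝ) < d := lt_trans zero_lt_one hd
  have hHalf : {z : ℂ | 0 < z.im} ⊆ {z : ℂ | 0 ≤ z.im} := by
    intro z hz
    show (0:ℝ) ≤ z.im
    exact le_of_lt hz
  have hsub' : ∀ z ∈ {z : ℂ | 0 < z.im}, ∀ r : ℝ, 0 < r →
      Metric.closedBall z r ⊆ {z : ℂ | 0 < z.im} →
      v z ≤ (2 * π)⁻¹ * ∫ θ in (0:ℝ)..(2*π), v (z + r * Complex.exp (θ * Complex.I)) := hsub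
  -- homogeneity for integer powers
  have him_smul : ∀ (t : ℝ) (z : ℂ), (((t:ℝ):ℂ) * z).im = t * z.im := by
    intro t z
    simp [Complex.mul_im]
  have hzpow : ∀ (n : ℤ) (z : ℂ), 0 ≤ z.im → v (((d^n : ℝ) : ℂ) * z) = d^n * v z := by
    intro n
    induction n using Int.induction_on with
    | zero => intro z hz; simp
    | succ p ih =>
      intro z hz
      have h1 : ((d:ℝ)^((p:ℤ)+1) : ℝ) = d * (d:ℝ)^(p:ℤ) := by
        rw [zpow_add_one₀ hd0.ne']; ring
      have h2 : (((d^((p:ℤ)+1) : ℝ)) : ℂ) * z = (d:ℂ) * (((d^(p:ℤ) : ℝ):ℂ) * z) := by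
        rw [h1]; push_cast; ring
      rw [h2, hhom _ (by rw [him_smul]; positivity), ih z hz, h1]
      ring
    | pred p ih =>
      intro z hz
      have hw : 0 ≤ ((((d^(-(p:ℤ)-1) : ℝ)):ℂ) * z).im := by
        rw [him_smul]; positivity
      have h2 : (((d^(-(p:ℤ)) : ℝ)):ℂ) * z = (d:ℂ) * ((((d^(-(p:ℤ)-1) : ℝ)):ℂ) * z) := by
        have : ((d:ℝ)^(-(p:ℤ)) : ℝ) = d * (d:ℝ)^(-(p:ℤ)-1) := by
          rw [mul_comm, ← zpow_add_one₀ hd0.ne']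
          congr 1
          ring
        rw [this]; push_cast; ring
      have h3 := hhom _ hw
      rw [← h2, ih z hz] at h3
      have hd1 : (d:ℝ) ≠ 0 := hd0.ne'
      have : v ((((d^(-(p:ℤ)-1) : ℝ)):ℂ) * z) = d^(-(p:ℤ)) * v z / d := by
        field_simp at h3 ⊢
        linarith
      rw [this]
      rw [show ((-(p:ℤ)-1) : ℤ) = -(p:ℤ) - 1 from rfl]
      rw [zpow_sub_one₀ hd1]
      ring
  -- globalization from the annulus
  have hglobal : ∀ (a : ℝ),
      (∀ w : ℂ, 0 < w.im → 1 ≤ ‖w‖ → ‖w‖ ≤ d → v w ≤ a * w.im) →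
      ∀ z : ℂ, 0 < z.im → v z ≤ a * z.im := by
    intro a ha z hz
    have habs : 0 < ‖z‖ := by
      rw [norm_pos_iff]
      intro h; rw [h] at hz; simp at hz
    obtain ⟨n, hn1, hn2⟩ := exists_mem_Ico_zpow habs hd
    set w : ℂ := ((d^(-n:ℤ) : ℝ) : ℂ) * z with hwdef
    have hdn : (0:ℝ) < d^(n:ℤ) := zpow_pos hd0 _
    have hdnn : (0:ℝ) < d^(-n:ℤ) := zpow_pos hd0 _
    have hwim : 0 < w.im := by rw [hwdef, him_smul]; positivity
    have hwabs : ‖w‖ = d^(-n:ℤ) * ‖z‖ := by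
      rw [hwdef, norm_mul, Complex.norm_real, Real.norm_eq_abs, abs_of_pos hdnn]
    have hw1 : 1 ≤ ‖w‖ := by
      rw [hwabs]
      rw [zpow_neg, le_inv_mul_iff₀ hdn]
      simpa using hn1
    have hw2 : ‖w‖ ≤ d := by
      rw [hwabs, zpow_neg]
      rw [inv_mul_le_iff₀ hdn]
      calc ‖z‖ ≤ d^(n+1:ℤ) := hn2.le
        _ = d^(n:ℤ) * d := by rw [zpow_add_one₀ hd0.ne']
    have hzw : z = ((d^(n:ℤ) : ℝ) : ℂ) * w := by
      rw [hwdef, ← mul_assoc]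
      have : ((d^(n:ℤ) : ℝ) : ℂ) * ((d^(-n:ℤ) : ℝ) : ℂ) = 1 := by
        rw [← Complex.ofReal_mul, ← zpow_add₀ hd0.ne']
        simp
      rw [this, one_mul]
    have hv := hzpow n w hwim.le
    rw [← hzw] at hv
    have := ha w hwim hw1 hw2
    have himz : z.im = d^(n:ℤ) * w.im := by rw [hzw, him_smul]
    calc v z = d^(n:ℤ) * v w := hv
      _ ≤ d^(n:ℤ) * (a * w.im) := by
          apply mul_le_mul_of_nonneg_left this hdn.le
      _ = a * (d^(n:ℤ) * w.im) := by ring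
      _ = a * z.im := by rw [himz]
  -- bound on compact half-disk
  obtain ⟨M, hM⟩ : ∃ M : ℝ, ∀ z ∈ ({z : ℂ | 0 ≤ z.im} ∩ Metric.closedBall 0 d), ‖v z‖ ≤ M := by
    have hcomp : IsCompact ({z : ℂ | 0 ≤ z.im} ∩ Metric.closedBall 0 d) := by
      apply IsCompact.inter_left (isCompact_closedBall _ _)
      have : {z : ℂ | 0 ≤ z.im} = Complex.im ⁻¹' (Set.Ici 0) := rfl
      rw [this]; exact isClosed_Ici.preimage Complex.continuous_im
    exact hcomp.exists_bound_of_continuousOn (hcont.mono Set.inter_subset_left)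
  have hM0 : 0 ≤ M := by
    have := hM 0 ⟨by simp, by simp [hd0.le]⟩
    exact le_trans (norm_nonneg _) this
  have hMv : ∀ z ∈ ({z : ℂ | 0 ≤ z.im} ∩ Metric.closedBall 0 d), v z ≤ M := by
    intro z hz
    exact le_trans (le_abs_self _) (hM z hz)
  -- linear growth bound
  have hMabs : ∀ z : ℂ, 0 ≤ z.im → v z ≤ M * ‖z‖ := by
    intro z hz
    by_cases h0 : z = 0
    · rw [h0]
      have : v 0 = 0 := by rw [show (0:ℂ) = ((0:ℝ):ℂ) by simp]; exact hreal 0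
      simp [this]
    · have habs : 0 < ‖z‖ := by rwa [norm_pos_iff]
      obtain ⟨n, hn1, hn2⟩ := exists_mem_Ico_zpow habs hd
      set w : ℂ := ((d^(-n:ℤ) : ℝ) : ℂ) * z with hwdef
      have hdn : (0:ℝ) < d^(n:ℤ) := zpow_pos hd0 _
      have hdnn : (0:ℝ) < d^(-n:ℤ) := zpow_pos hd0 _
      have hwim : 0 ≤ w.im := by rw [hwdef, him_smul]; positivity
      have hwabs : ‖w‖ = d^(-n:ℤ) * ‖z‖ := by
        rw [hwdef, norm_mul, Complex.norm_real, Real.norm_eq_abs, abs_of_pos hdnn]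
      have hw2 : ‖w‖ ≤ d := by
        rw [hwabs, zpow_neg, inv_mul_le_iff₀ hdn]
        calc ‖z‖ ≤ d^(n+1:ℤ) := hn2.le
          _ = d^(n:ℤ) * d := by rw [zpow_add_one₀ hd0.ne']
      have hzw : z = ((d^(n:ℤ) : ℝ) : ℂ) * w := by
        rw [hwdef, ← mul_assoc]
        have : ((d^(n:ℤ) : ℝ) : ℂ) * ((d^(-n:ℤ) : ℝ) : ℂ) = 1 := by
          rw [← Complex.ofReal_mul, ← zpow_add₀ hd0.ne']
          simp
        rw [this, one_mul]
      have hv := hzpow n w hwim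
      rw [← hzw] at hv
      have hvw : v w ≤ M := hMv w ⟨hwim, by
        rw [Metric.mem_closedBall, Complex.dist_eq, sub_zero]; exact hw2⟩
      calc v z = d^(n:ℤ) * v w := hv
        _ ≤ d^(n:ℤ) * M := mul_le_mul_of_nonneg_left hvw hdn.le
        _ ≤ ‖z‖ * M := mul_le_mul_of_nonneg_right hn1 hM0
        _ = M * ‖z‖ := by ring
  -- PL application 1: linear bound in Im z
  have hC : ∀ z : ℂ, 0 < z.im → v z ≤ 2 * M * z.im := by
    intro z hz
    set x := z.re with hxdef
    set y := z.im with hydef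
    have hF : ∀ R : ℝ, y < R → v z ≤ M * (|x| + R) * R * (2 * y / (R^2 + y^2)) := by
      intro R hR
      have hR0 : 0 < R := lt_trans hz hR
      have hκ0 : 0 ≤ M * (|x| + R) * R := by positivity
      have harc : ∀ w : ℂ, 0 < w.im → ‖w - (x:ℂ)‖ = R →
          v w ≤ 0 * w.im + (M * (|x| + R) * R) * (psi (x+R) w + psi (x-R) w) := by
        intro w hwim hwabs
        set a := w.re - x with hadef
        set b := w.im with hbdef
        have hab : a^2 + b^2 = R^2 := by
          have : Complex.normSq (w - (x:ℂ)) = R^2 := by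
            rw [← Complex.sq_norm, hwabs]
          rw [Complex.normSq_apply] at this
          simp only [Complex.sub_re, Complex.sub_im, Complex.ofReal_re, Complex.ofReal_im,
            sub_zero] at this
          rw [← this]; ring
        have hb0 : 0 < b := hwim
        have hbR : b ≤ R := by nlinarith [sq_nonneg a, sq_nonneg (b - R), sq_nonneg (b + R)]
        have ha1 : 0 < R - a := by nlinarith [sq_nonneg (a - R), sq_nonneg (a + R)]
        have ha2 : 0 < R + a := by nlinarith [sq_nonneg (a - R), sq_nonneg (a + R)]
        have hpsi1 : psi (x+R) w = b / (2*R*(R-a)) := by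
          unfold psi
          rw [Complex.normSq_apply]
          simp only [Complex.sub_re, Complex.sub_im, Complex.ofReal_re, Complex.ofReal_im,
            sub_zero]
          rw [show (w.re - (x+R)) * (w.re - (x+R)) + w.im * w.im = 2*R*(R-a) by
            rw [show w.re - (x+R) = a - R by rw [hadef]; ring]; nlinarith]
        have hpsi2 : psi (x-R) w = b / (2*R*(R+a)) := by
          unfold psi
          rw [Complex.normSq_apply]
          simp only [Complex.sub_re, Complex.sub_im, Complex.ofReal_re, Complex.ofReal_im,
            sub_zero]
          rw [show (w.re - (x-R)) * (w.re - (x-R)) + w.im * w.im = 2*R*(R+a) by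
            rw [show w.re - (x-R) = a + R by rw [hadef]; ring]; nlinarith]
        have hsum : psi (x+R) w + psi (x-R) w = 1 / b := by
          rw [hpsi1, hpsi2]
          have hb0 : 0 < b := hwim
          field_simp
          nlinarith [hab]
        rw [hsum, zero_mul, zero_add]
        have h1 : v w ≤ M * (|x| + R) := by
          have := hMabs w hwim.le
          have habs : ‖w‖ ≤ |x| + R := by
            calc ‖w‖ = ‖(w - (x:ℂ)) + (x:ℂ)‖ := by ring_nf
              _ ≤ ‖w - (x:ℂ)‖ + ‖(x:ℂ)‖ := norm_add_le _ _
              _ = R + |x| := by rw [hwabs, Complex.norm_real, Real.norm_eq_abs]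
              _ = |x| + R := by ring
          calc v w ≤ M * ‖w‖ := this
            _ ≤ M * (|x| + R) := mul_le_mul_of_nonneg_left habs hM0
        have h2 : M * (|x| + R) ≤ M * (|x| + R) * R * (1/b) := by
          rw [show M * (|x| + R) * R * (1/b) = M * (|x| + R) * (R / b) by ring]
          have hRb : 1 ≤ R / b := by
            rw [le_div_iff₀ hwim]; simpa using hbR
          nlinarith [mul_nonneg hM0 (abs_nonneg x)]
        linarith
      have := PL v hcont hreal hsub' x R 0 (M * (|x| + R) * R) hR0 le_rfl hκ0 harc z hz
        (by
          rw [show z - (x:ℂ) = Complex.I * y by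
            apply Complex.ext <;> simp [hxdef, hydef]
          ]
          rw [norm_mul, Complex.norm_I, one_mul, Complex.norm_real, Real.norm_eq_abs, abs_of_pos hz]
          exact hR)
      have hpsiz1 : psi (x+R) z = y / (R^2 + y^2) := by
        unfold psi
        rw [Complex.normSq_apply]
        simp only [Complex.sub_re, Complex.sub_im, Complex.ofReal_re, Complex.ofReal_im, sub_zero]
        rw [show (z.re - (x+R)) * (z.re - (x+R)) + z.im * z.im = R^2 + y^2 by
          rw [show z.re - (x+R) = -R by rw [hxdef]; ring]; rw [hydef]; ring]
      have hpsiz2 : psi (x-R) z = y / (R^2 + y^2) := by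
        unfold psi
        rw [Complex.normSq_apply]
        simp only [Complex.sub_re, Complex.sub_im, Complex.ofReal_re, Complex.ofReal_im, sub_zero]
        rw [show (z.re - (x-R)) * (z.re - (x-R)) + z.im * z.im = R^2 + y^2 by
          rw [show z.re - (x-R) = R by rw [hxdef]; ring]; rw [hydef]; ring]
      rw [hpsiz1, hpsiz2, zero_mul, zero_add] at this
      calc v z ≤ M * (|x| + R) * R * (y / (R^2+y^2) + y / (R^2+y^2)) := this
        _ = M * (|x| + R) * R * (2 * y / (R^2 + y^2)) := by ring
    -- take the limit R → ∞
    have htend : Filter.Tendsto (fun R : ℝ => M * (|x| + R) * R * (2 * y / (R^2 + y^2)))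
        Filter.atTop (nhds (2 * M * y)) := by
      have heq : (fun R : ℝ => M * (|x| + R) * R * (2 * y / (R^2 + y^2)))
          =ᶠ[Filter.atTop] fun R : ℝ => 2 * M * y * ((|x|/R + 1) / (1 + (y/R)^2)) := by
        filter_upwards [Filter.eventually_ge_atTop (1:ℝ)] with R hR
        have hR0 : (0:ℝ) < R := lt_of_lt_of_le zero_lt_one hR
        have hden : (0:ℝ) < R^2 + y^2 := by positivity
        field_simp
      have h1 : Filter.Tendsto (fun R : ℝ => |x|/R) Filter.atTop (nhds 0) :=
        tendsto_const_nhds.div_atTop Filter.tendsto_id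
      have h2 : Filter.Tendsto (fun R : ℝ => y/R) Filter.atTop (nhds 0) :=
        tendsto_const_nhds.div_atTop Filter.tendsto_id
      have h3 : Filter.Tendsto (fun R : ℝ => (|x|/R + 1) / (1 + (y/R)^2))
          Filter.atTop (nhds ((0 + 1) / (1 + 0^2))) :=
        (h1.add tendsto_const_nhds).div (tendsto_const_nhds.add (h2.pow 2)) (by norm_num)
      have h4 : Filter.Tendsto (fun R : ℝ => 2 * M * y * ((|x|/R + 1) / (1 + (y/R)^2)))
          Filter.atTop (nhds (2 * M * y)) := by
        have h5 := h3.const_mul (2 * M * y)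
        norm_num at h5
        exact h5
      exact Filter.Tendsto.congr' heq.symm h4
    apply ge_of_tendsto htend
    filter_upwards [Filter.eventually_gt_atTop y] with R hR
    exact hF R hR
  -- the optimal constant
  have hv0 : ∀ z : ℂ, z.im = 0 → v z = 0 := by
    intro z hz
    have : z = ((z.re : ℝ):ℂ) := Complex.ext (by simp) (by simp [hz])
    rw [this]; exact hreal _
  set Sset : Set ℝ := {a : ℝ | 0 ≤ a ∧ ∀ z : ℂ, 0 ≤ z.im → v z ≤ a * z.im} with hSsetdef
  have h2M : (2*M) ∈ Sset := by
    refine ⟨by positivity, fun z hz => ?_⟩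
    rcases eq_or_lt_of_le hz with h|h
    · rw [hv0 z h.symm, ← h]; simp
    · exact hC z h
  have hSne : Sset.Nonempty := ⟨2*M, h2M⟩
  have hSbdd : BddBelow Sset := ⟨0, fun a ha => ha.1⟩
  set A := sInf Sset with hAdef
  have hA0 : 0 ≤ A := le_csInf hSne (fun a ha => ha.1)
  have hAle : ∀ z : ℂ, 0 ≤ z.im → v z ≤ A * z.im := by
    intro z hz
    rcases eq_or_lt_of_le hz with h|h
    · rw [hv0 z h.symm, ← h]; simp
    · have hlb : ∀ a ∈ Sset, v z / z.im ≤ a := fun a ha => (div_le_iff₀ h).2 (ha.2 z hz)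
      exact (div_le_iff₀ h).1 (le_csInf hSne hlb)
  by_cases hex : ∃ z₀ : ℂ, 0 < z₀.im ∧ v z₀ = A * z₀.im
  · -- the bound is attained: strong maximum principle
    obtain ⟨z₀, hz₀, hveq⟩ := hex
    set u : ℂ → ℝ := fun z => v z - A * z.im with hudef
    have hucont : ContinuousOn u {z : ℂ | 0 < z.im} :=
      ContinuousOn.sub (hcont.mono hHalf)
        ((continuous_const.mul Complex.continuous_im).continuousOn)
    have husm : ∀ z ∈ {z : ℂ | 0 < z.im}, ∀ r : ℝ, 0 < r →
        Metric.closedBall z r ⊆ {z : ℂ | 0 < z.im} →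
        u z ≤ (2 * π)⁻¹ * ∫ θ in (0:ℝ)..(2*π), u (z + r * Complex.exp (θ * Complex.I)) := by
      intro z hz r hr hball
      have h2π : (0:ℝ) < 2*π := by positivity
      have h1 := hsub' z hz r hr hball
      have hcirc : Continuous (fun θ : ℝ => z + (r:ℂ) * Complex.exp ((θ:ℂ) * Complex.I)) :=
        continuous_const.add (continuous_const.mul
          (Complex.continuous_exp.comp (Complex.continuous_ofReal.mul continuous_const)))
      have hvcont2 : Continuous (fun θ : ℝ => v (z + (r:ℂ) * Complex.exp ((θ:ℂ) * Complex.I))) := by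
        apply ContinuousOn.comp_continuous (s := {z : ℂ | 0 ≤ z.im}) hcont hcirc
        intro θ
        have : z + (r:ℂ) * Complex.exp ((θ:ℂ) * Complex.I) ∈ Metric.closedBall z r := by
          rw [Metric.mem_closedBall, Complex.dist_eq]
          have he : z + ↑r * Complex.exp (↑θ * Complex.I) - z = ↑r * Complex.exp (↑θ * Complex.I) := by ring
          rw [he, norm_mul, Complex.norm_real, Real.norm_eq_abs, Complex.norm_exp_ofReal_mul_I, mul_one, abs_of_pos hr]
        exact hHalf (hball this)
      have hie : (fun θ : ℝ => A * (z + (r:ℂ) * Complex.exp ((θ:ℂ) * Complex.I)).im)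
          = fun θ : ℝ => A * z.im + A * r * Real.sin θ := by
        funext θ
        rw [Complex.add_im, Complex.mul_im, Complex.ofReal_re, Complex.ofReal_im]
        rw [Complex.exp_ofReal_mul_I_im]
        ring
      have hH : (∫ θ in (0:ℝ)..(2*π), A * (z + (r:ℂ) * Complex.exp ((θ:ℂ) * Complex.I)).im)
          = 2 * π * (A * z.im) := by
        rw [hie]
        rw [intervalIntegral.integral_add (f := fun _ => A * z.im) (g := fun θ => A * r * Real.sin θ) (intervalIntegrable_const)
          (((continuous_const.mul Real.continuous_sin).intervalIntegrable) _ _)]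
        rw [intervalIntegral.integral_const]
        rw [intervalIntegral.integral_const_mul, integral_sin]
        rw [Real.cos_zero, Real.cos_two_pi]
        simp only [smul_eq_mul]
        ring
      have hIeq : (∫ θ in (0:ℝ)..(2*π), u (z + (r:ℂ) * Complex.exp ((θ:ℂ) * Complex.I)))
          = (∫ θ in (0:ℝ)..(2*π), v (z + (r:ℂ) * Complex.exp ((θ:ℂ) * Complex.I)))
            - 2 * π * (A * z.im) := by
        rw [show (fun θ : ℝ => u (z + (r:ℂ) * Complex.exp ((θ:ℂ) * Complex.I)))
            = (fun θ : ℝ => v (z + (r:ℂ) * Complex.exp ((θ:ℂ) * Complex.I))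
              - A * (z + (r:ℂ) * Complex.exp ((θ:ℂ) * Complex.I)).im) from rfl]
        rw [intervalIntegral.integral_sub (hvcont2.intervalIntegrable _ _)
          (by rw [hie]; exact ((continuous_const.add
            (continuous_const.mul Real.continuous_sin)).intervalIntegrable _ _)), hH]
      show v z - A * z.im ≤ (2 * π)⁻¹ * ∫ θ in (0:ℝ)..(2*π), u (z + (r:ℂ) * Complex.exp ((θ:ℂ) * Complex.I))
      rw [hIeq, mul_sub, ← mul_assoc, inv_mul_cancel₀ h2π.ne', one_mul]
      linarith
    have hule : ∀ z : ℂ, 0 < z.im → u z ≤ 0 := fun z hz => sub_nonpos.2 (hAle z hz.le)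
    have hall := strongMax u hucont husm hule z₀ hz₀ (by simp [hudef, hveq])
    refine ⟨A, hA0, fun z hz => ?_⟩
    rcases eq_or_lt_of_le hz with h|h
    · rw [hv0 z h.symm, ← h]; simp
    · have := hall z h
      simp only [hudef] at this
      linarith
  · -- strict inequality everywhere: contradiction with minimality of A
    push_neg at hex
    have hstrict : ∀ z : ℂ, 0 < z.im → v z < A * z.im :=
      fun z hz => lt_of_le_of_ne (hAle z hz.le) (hex z hz)
    exfalso
    have hApos : 0 < A := by
      rcases eq_or_lt_of_le hA0 with h|h
      · exfalso
        have h1 := hstrict Complex.I (by simp)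
        rw [← h] at h1
        simp only [zero_mul] at h1
        exact absurd h1 (not_lt.2 (hpos Complex.I (by simp)))
      · exact h
    set K2 : Set ℂ := {z : ℂ | (1:ℝ)/3 ≤ z.im} ∩ Metric.closedBall 0 (d+1) with hK2def
    have hK2comp : IsCompact K2 := by
      apply IsCompact.inter_left (isCompact_closedBall _ _)
      have : {z : ℂ | (1:ℝ)/3 ≤ z.im} = Complex.im ⁻¹' (Set.Ici (1/3)) := rfl
      rw [this]; exact isClosed_Ici.preimage Complex.continuous_im
    have hK2ne : K2.Nonempty := by
      refine ⟨Complex.I, ⟨by norm_num [Complex.I_im], ?_⟩⟩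
      rw [Metric.mem_closedBall, Complex.dist_eq, sub_zero, Complex.norm_I]
      linarith
    have hK2sub : ∀ w ∈ K2, 0 < w.im := by
      intro w hw
      have : (1:ℝ)/3 ≤ w.im := hw.1
      linarith
    obtain ⟨z₁, hz₁K, hz₁max⟩ := hK2comp.exists_isMaxOn hK2ne
      (ContinuousOn.sub (hcont.mono (fun w hw => hHalf (hK2sub w hw)))
        ((continuous_const.mul Complex.continuous_im).continuousOn) :
        ContinuousOn (fun z => v z - A * z.im) K2)
    set η := A * z₁.im - v z₁ with hηdef
    have hηpos : 0 < η := by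
      have := hstrict z₁ (hK2sub z₁ hz₁K)
      simp only [hηdef]
      linarith
    set δ := min (η/(d+1)) A with hδdef
    have hδpos : 0 < δ := lt_min (by positivity) hApos
    have hδA : δ ≤ A := min_le_right _ _
    have hK2bound : ∀ w ∈ K2, v w ≤ (A - δ) * w.im := by
      intro w hw
      have h1 : v w - A * w.im ≤ v z₁ - A * z₁.im := hz₁max hw
      have h2 : w.im ≤ d + 1 := by
        have := hw.2
        rw [Metric.mem_closedBall, Complex.dist_eq, sub_zero] at this
        exact le_trans (le_trans (le_abs_self _) (Complex.abs_im_le_norm w)) this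
      have h3 : δ * w.im ≤ η := by
        have hδη : δ ≤ η/(d+1) := min_le_left _ _
        have hwim : 0 < w.im := hK2sub w hw
        calc δ * w.im ≤ (η/(d+1)) * w.im := by nlinarith
          _ ≤ (η/(d+1)) * (d+1) := by
              apply mul_le_mul_of_nonneg_left h2 (by positivity)
          _ = η := by field_simp
      simp only [hηdef] at h1 h3
      nlinarith
    -- improved bound on the annulus via PL application 2
    have hann : ∀ w : ℂ, 0 < w.im → 1 ≤ ‖w‖ → ‖w‖ ≤ d →
        v w ≤ (A - δ/2) * w.im := by
      intro w hwim hw1 hw2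
      by_cases hcase : (1:ℝ)/3 ≤ w.im
      · have hwK2 : w ∈ K2 := ⟨hcase, by
          rw [Metric.mem_closedBall, Complex.dist_eq, sub_zero]; linarith⟩
        have := hK2bound w hwK2
        nlinarith
      · push_neg at hcase
        set x := w.re with hxdef
        have hxd : |x| ≤ d := le_trans (Complex.abs_re_le_norm w) hw2
        have harc2 : ∀ ω : ℂ, 0 < ω.im → ‖ω - (x:ℂ)‖ = 1 →
            v ω ≤ (A - δ) * ω.im + (δ/4) * (psi (x+1) ω + psi (x-1) ω) := by
          intro ω hωim hωabs
          set a := ω.re - x with hadef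
          set b := ω.im with hbdef
          have hb0 : 0 < b := hωim
          have hab : a^2 + b^2 = 1 := by
            have hns : Complex.normSq (ω - (x:ℂ)) = 1 := by
              rw [← Complex.sq_norm, hωabs]; norm_num
            rw [Complex.normSq_apply] at hns
            simp only [Complex.sub_re, Complex.sub_im, Complex.ofReal_re, Complex.ofReal_im,
              sub_zero] at hns
            rw [← hns]; ring
          have hpsi1 : psi (x+1) ω = b / ((a-1)^2 + b^2) := by
            unfold psi
            rw [Complex.normSq_apply]
            simp only [Complex.sub_re, Complex.sub_im, Complex.ofReal_re, Complex.ofReal_im,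
              sub_zero]
            rw [show (ω.re - (x+1)) * (ω.re - (x+1)) + ω.im * ω.im = (a-1)^2 + b^2 by
              rw [show ω.re - (x+1) = a - 1 by rw [hadef]; ring]; rw [hbdef]; ring]
          have hpsi2 : psi (x-1) ω = b / ((a+1)^2 + b^2) := by
            unfold psi
            rw [Complex.normSq_apply]
            simp only [Complex.sub_re, Complex.sub_im, Complex.ofReal_re, Complex.ofReal_im,
              sub_zero]
            rw [show (ω.re - (x-1)) * (ω.re - (x-1)) + ω.im * ω.im = (a+1)^2 + b^2 by
              rw [show ω.re - (x-1) = a + 1 by rw [hadef]; ring]; rw [hbdef]; ring]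
          have hpsinn1 : 0 ≤ psi (x+1) ω := psi_nonneg _ _ hb0.le
          have hpsinn2 : 0 ≤ psi (x-1) ω := psi_nonneg _ _ hb0.le
          by_cases hbig : (1:ℝ)/3 ≤ b
          · have hωK2 : ω ∈ K2 := by
              refine ⟨hbig, ?_⟩
              rw [Metric.mem_closedBall, Complex.dist_eq, sub_zero]
              calc ‖ω‖ = ‖(ω - (x:ℂ)) + (x:ℂ)‖ := by ring_nf
                _ ≤ ‖ω - (x:ℂ)‖ + ‖(x:ℂ)‖ := norm_add_le _ _
                _ = 1 + |x| := by rw [hωabs, Complex.norm_real, Real.norm_eq_abs]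
                _ ≤ d + 1 := by linarith
            have := hK2bound ω hωK2
            nlinarith
          · push_neg at hbig
            have hvA : v ω ≤ A * b := hAle ω hb0.le
            have hkey : δ * b ≤ (δ/4) * (psi (x+1) ω + psi (x-1) ω) := by
              by_cases ha : 0 ≤ a
              · have ha1 : a ≤ 1 := by nlinarith
                have hnsq : (a-1)^2 + b^2 ≤ 2 * b^2 := by nlinarith
                have hnsq0 : 0 < (a-1)^2 + b^2 := by positivity
                have hge : b / (2 * b^2) ≤ psi (x+1) ω := by
                  rw [hpsi1]
                  apply div_le_div_of_nonneg_left hb0.le hnsq0 hnsq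
                have hval : b / (2*b^2) = 1/(2*b) := by
                  field_simp
                rw [hval] at hge
                have hb18 : b^2 ≤ 1/8 := by nlinarith
                calc δ * b ≤ (δ/4) * (1/(2*b)) := by
                      rw [show (δ/4) * (1/(2*b)) = δ / (8*b) by ring,
                        le_div_iff₀ (by positivity : (0:ℝ) < 8*b)]
                      nlinarith
                  _ ≤ (δ/4) * psi (x+1) ω := by nlinarith
                  _ ≤ (δ/4) * (psi (x+1) ω + psi (x-1) ω) := by nlinarith
              · push_neg at ha
                have ha1 : -1 ≤ a := by nlinarith
                have hnsq : (a+1)^2 + b^2 ≤ 2 * b^2 := by nlinarith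
                have hnsq0 : 0 < (a+1)^2 + b^2 := by positivity
                have hge : b / (2 * b^2) ≤ psi (x-1) ω := by
                  rw [hpsi2]
                  apply div_le_div_of_nonneg_left hb0.le hnsq0 hnsq
                have hval : b / (2*b^2) = 1/(2*b) := by
                  field_simp
                rw [hval] at hge
                have hb18 : b^2 ≤ 1/8 := by nlinarith
                calc δ * b ≤ (δ/4) * (1/(2*b)) := by
                      rw [show (δ/4) * (1/(2*b)) = δ / (8*b) by ring,
                        le_div_iff₀ (by positivity : (0:ℝ) < 8*b)]
                      nlinarith
                  _ ≤ (δ/4) * psi (x-1) ω := by nlinarith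
                  _ ≤ (δ/4) * (psi (x+1) ω + psi (x-1) ω) := by nlinarith
            calc v ω ≤ A * b := hvA
              _ = (A - δ) * b + δ * b := by ring
              _ ≤ (A - δ) * b + (δ/4) * (psi (x+1) ω + psi (x-1) ω) := by linarith
        have hPL := PL v hcont hreal hsub' x 1 (A - δ) (δ/4) one_pos
          (by linarith) (by positivity) harc2 w hwim
          (by
            rw [show w - (x:ℂ) = Complex.I * (w.im:ℝ) by
              apply Complex.ext <;> simp [hxdef]]
            rw [norm_mul, Complex.norm_I, one_mul, Complex.norm_real, Real.norm_eq_abs, abs_of_pos hwim]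
            linarith)
        have hpsiw1 : psi (x+1) w = w.im / (1 + w.im^2) := by
          unfold psi
          rw [Complex.normSq_apply]
          simp only [Complex.sub_re, Complex.sub_im, Complex.ofReal_re, Complex.ofReal_im,
            sub_zero]
          rw [show (w.re - (x+1)) * (w.re - (x+1)) + w.im * w.im = 1 + w.im^2 by
            rw [show w.re - (x+1) = -1 by rw [hxdef]; ring]; ring]
        have hpsiw2 : psi (x-1) w = w.im / (1 + w.im^2) := by
          unfold psi
          rw [Complex.normSq_apply]
          simp only [Complex.sub_re, Complex.sub_im, Complex.ofReal_re, Complex.ofReal_im,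
            sub_zero]
          rw [show (w.re - (x-1)) * (w.re - (x-1)) + w.im * w.im = 1 + w.im^2 by
            rw [show w.re - (x-1) = 1 by rw [hxdef]; ring]; ring]
        rw [hpsiw1, hpsiw2] at hPL
        have hden : (0:ℝ) < 1 + w.im^2 := by positivity
        have hple : w.im / (1 + w.im^2) ≤ w.im := by
          rw [div_le_iff₀ hden]
          nlinarith
        have hpnn : 0 ≤ w.im / (1 + w.im^2) := by positivity
        calc v w ≤ (A - δ) * w.im + (δ/4) * (w.im/(1+w.im^2) + w.im/(1+w.im^2)) := hPL
          _ ≤ (A - δ) * w.im + (δ/4) * (2 * w.im) := by nlinarith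
          _ = (A - δ/2) * w.im := by ring
    have hglob2 := hglobal (A - δ/2) hann
    have hmem2 : (A - δ/2) ∈ Sset := by
      refine ⟨by linarith, fun z hz => ?_⟩
      rcases eq_or_lt_of_le hz with h|h
      · rw [hv0 z h.symm, ← h]; simp
      · exact hglob2 z h
    have hcontra := csInf_le hSbdd hmem2
    rw [← hAdef] at hcontra
    linarith
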